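/- Let U ⊆ ℝⁿ be open, x ∈ ∂U, and suppose there exist δ > 0, a unit vector k, and a Lipschitz function f: ℝⁿ⁻¹ → ℝ with f(0) = 0 such that for all y with |y−x| < δ, y ∈ U iff k·(y−x) < f(P(y−x)), where P is orthogonal projection onto k⊥ (identified with ℝⁿ⁻¹). Then there exists an open cone C̊ (namely the cone of opening determined by the Lipschitz constant of f) such that for every boundary point z ∈ ∂U ∩ B(x, δ): (z − C̊) ∩ B(x, δ) ⊆ U and (z + C̊) ∩ B(x, δ) ⊆ ℝⁿ \ closure(U). -/

import Mathlib

open Set Topology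

/-- Append a last coordinate to a vector of `ℝⁿ`, giving a vector of `ℝⁿ⁺¹`. -/
noncomputable def snocE {n : ℕ} (v : EuclideanSpace ℝ (Fin n)) (a : ℝ) :
    EuclideanSpace ℝ (Fin (n + 1)) :=
  WithLp.toLp 2 (Fin.snoc (fun j => v j) a)

/-- Projection of `ℝⁿ⁺¹` onto the first `n` coordinates. -/
noncomputable def projE {n : ℕ} (y : EuclideanSpace ℝ (Fin (n + 1))) :
    EuclideanSpace ℝ (Fin n) :=
  WithLp.toLp 2 (fun i => y i.castSucc)

/-- The open cone `C̊ = ℝ_{>0} · (B_{ℝⁿ}(0,1) × {K})` with axis the last coordinate. -/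
def coneSet (n : ℕ) (K : ℝ) : Set (EuclideanSpace ℝ (Fin (n + 1))) :=
  {c | ∃ t : ℝ, 0 < t ∧ ∃ v : EuclideanSpace ℝ (Fin n), ‖v‖ < 1 ∧ c = t • snocE v K}

/-!
Let `φ y = yₙ - f (P y)` be the height of `y` above the graph of `f` (`graphHeight`), so that
near `x` the set `U` is `{y | φ (y - x) < 0}`. Since `f` is `K`-Lipschitz, moving by a vector
of the cone of slope `K` strictly increases `φ`. At a boundary point `z` one has `φ (z - x) = 0`:
it is `≥ 0` because `U` is open, and `≤ 0` because the open set `{φ (· - x) > 0}` misses `U`,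
hence its closure. So `z - C̊` lies where `φ (· - x) < 0`, i.e. in `U`, and `z + C̊` lies in the
open set `{φ (· - x) > 0}`, which misses `closure U`.
-/

section SublevelSet

variable {X : Type*} [TopologicalSpace X] {U V : Set X} {g : X → ℝ}

theorem notMem_closure_of_pos (hg : Continuous g) (hV : IsOpen V)
    (hUV : ∀ y ∈ V, y ∈ U ↔ g y < 0) {y : X} (hyV : y ∈ V) (hy : 0 < g y) :
    y ∉ closure U := by
  have hdisj : Disjoint (V ∩ {w | 0 < g w}) U :=
    Set.disjoint_left.mpr fun w ⟨hwV, hw⟩ hwU => ((hUV w hwV).mp hwU).not_gt hw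
  exact Set.disjoint_left.mp (hdisj.closure_right (hV.inter (isOpen_lt continuous_const hg)))
    ⟨hyV, hy⟩

theorem eq_zero_of_mem_frontier (hU : IsOpen U) (hg : Continuous g) (hV : IsOpen V)
    (hUV : ∀ y ∈ V, y ∈ U ↔ g y < 0) {z : X} (hzV : z ∈ V) (hz : z ∈ frontier U) :
    g z = 0 := by
  rw [hU.frontier_eq] at hz
  obtain ⟨hz_closure, hz_notMem⟩ := hz
  refine le_antisymm (not_lt.mp fun h => ?_) (not_lt.mp fun h => ?_)
  · exact notMem_closure_of_pos hg hV hUV hzV h hz_closure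
  · exact hz_notMem ((hUV z hzV).mpr h)

end SublevelSet

section GraphHeight

variable {n : ℕ}

theorem projE_add (y z : EuclideanSpace ℝ (Fin (n + 1))) :
    projE (y + z) = projE y + projE z := by
  ext i; simp [projE]

theorem projE_smul (t : ℝ) (y : EuclideanSpace ℝ (Fin (n + 1))) :
    projE (t • y) = t • projE y := by
  ext i; simp [projE]

theorem projE_snocE (v : EuclideanSpace ℝ (Fin n)) (a : ℝ) : projE (snocE v a) = v := by
  ext i; simp [projE, snocE]

theorem snocE_last (v : EuclideanSpace ℝ (Fin n)) (a : ℝ) : snocE v a (Fin.last n) = a := by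
  simp [snocE]

theorem continuous_projE : Continuous (projE (n := n)) := by
  unfold projE; fun_prop

noncomputable def graphHeight (f : EuclideanSpace ℝ (Fin n) → ℝ)
    (y : EuclideanSpace ℝ (Fin (n + 1))) : ℝ :=
  y (Fin.last n) - f (projE y)

variable {f : EuclideanSpace ℝ (Fin n) → ℝ}

theorem continuous_graphHeight (hf : Continuous f) : Continuous (graphHeight f) :=
  (PiLp.continuous_apply 2 _ (Fin.last n)).sub (hf.comp continuous_projE)

theorem graphHeight_lt_add_of_mem_coneSet {K : NNReal} {Kc : ℝ} (hf : LipschitzWith K f)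
    (hKc : 0 < Kc) (hK : K ≤ Kc) {c : EuclideanSpace ℝ (Fin (n + 1))} (hc : c ∈ coneSet n Kc)
    (y : EuclideanSpace ℝ (Fin (n + 1))) : graphHeight f y < graphHeight f (y + c) := by
  obtain ⟨t, ht, v, hv, rfl⟩ := hc
  have hlip : f (projE y + t • v) - f (projE y) ≤ K * (t * ‖v‖) :=
    calc f (projE y + t • v) - f (projE y)
        ≤ dist (f (projE y + t • v)) (f (projE y)) := le_abs_self _
      _ ≤ K * dist (projE y + t • v) (projE y) := hf.dist_le_mul _ _
      _ = K * (t * ‖v‖) := by rw [dist_self_add_left, norm_smul, Real.norm_of_nonneg ht.le]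
  have hslope : K * ‖v‖ < Kc :=
    calc K * ‖v‖ ≤ Kc * ‖v‖ := by gcongr
      _ < Kc := mul_lt_of_lt_one_right hKc hv
  simp only [graphHeight, projE_add, projE_smul, projE_snocE, PiLp.add_apply, PiLp.smul_apply,
    snocE_last, smul_eq_mul]
  nlinarith

end GraphHeight

theorem lipschitz_graph_implies_proper_cones_general {n : ℕ}
    (U : Set (EuclideanSpace ℝ (Fin (n + 1)))) (hU : IsOpen U)
    (x : EuclideanSpace ℝ (Fin (n + 1)))
    (δ : ℝ) (K : NNReal) (hK : 0 < K)
    (f : EuclideanSpace ℝ (Fin n) → ℝ) (hf : LipschitzWith K f)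
    (hgraph : ∀ y : EuclideanSpace ℝ (Fin (n + 1)), dist y x < δ →
      (y ∈ U ↔ y (Fin.last n) - x (Fin.last n) < f (projE (y - x)))) :
    ∃ Kc : ℝ, 0 < Kc ∧ ∀ z ∈ frontier U ∩ Metric.ball x δ,
      ((fun c => z - c) '' coneSet n Kc) ∩ Metric.ball x δ ⊆ U ∧
      ((fun c => z + c) '' coneSet n Kc) ∩ Metric.ball x δ ⊆ (closure U)ᶜ := by
  set g := fun y => graphHeight f (y - x) with hg_def
  have hg : Continuous g := (continuous_graphHeight hf.continuous).comp (continuous_sub_right x)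
  have hUg : ∀ y ∈ Metric.ball x δ, y ∈ U ↔ g y < 0 := fun y hy => by
    simp only [hgraph y hy, hg_def, graphHeight, PiLp.sub_apply, sub_lt_zero]
  refine ⟨K, hK, fun z ⟨hz, hzδ⟩ => ?_⟩
  have hz0 : g z = 0 := eq_zero_of_mem_frontier hU hg Metric.isOpen_ball hUg hzδ hz
  constructor
  · rintro _ ⟨⟨c, hc, rfl⟩, hyδ⟩
    refine (hUg _ hyδ).mpr (hz0 ▸ ?_)
    simpa [hg_def, sub_right_comm z c x] using
      graphHeight_lt_add_of_mem_coneSet hf hK le_rfl hc (z - x - c)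
  · rintro _ ⟨⟨c, hc, rfl⟩, hyδ⟩
    refine notMem_closure_of_pos hg Metric.isOpen_ball hUg hyδ (hz0 ▸ ?_)
    simpa [hg_def, add_sub_right_comm z c x] using
      graphHeight_lt_add_of_mem_coneSet hf hK le_rfl hc (z - x)

/-- If near `x ∈ ∂U` the open set `U` is characterized by the Lipschitz-graph condition
`y ∈ U ↔ (y−x)ⁿ < f(P(y−x))` (axis `k` taken, after a rotation, to be the last coordinate
direction), then there is an open cone `C̊` (determined by the Lipschitz constant of `f`)
giving interior and exterior cone conditions at every boundary point `z ∈ ∂U ∩ B(x,δ)`. -/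
theorem lipschitz_graph_implies_proper_cones {n : ℕ}
    (U : Set (EuclideanSpace ℝ (Fin (n + 1)))) (hU : IsOpen U)
    (x : EuclideanSpace ℝ (Fin (n + 1))) (hx : x ∈ frontier U)
    (δ : ℝ) (hδ : 0 < δ) (K : NNReal) (hK : 0 < K)
    (f : EuclideanSpace ℝ (Fin n) → ℝ) (hf : LipschitzWith K f) (hf0 : f 0 = 0)
    (hgraph : ∀ y : EuclideanSpace ℝ (Fin (n + 1)), dist y x < δ →
      (y ∈ U ↔ y (Fin.last n) - x (Fin.last n) < f (projE (y - x)))) :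
    ∃ Kc : ℝ, 0 < Kc ∧ ∀ z ∈ frontier U ∩ Metric.ball x δ,
      ((fun c => z - c) '' coneSet n Kc) ∩ Metric.ball x δ ⊆ U ∧
      ((fun c => z + c) '' coneSet n Kc) ∩ Metric.ball x δ ⊆ (closure U)ᶜ :=
  lipschitz_graph_implies_proper_cones_general U hU x δ K hK f hf hgraph
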